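/- arXiv:0803.4253 — 4 statements merged into one kernel-verified Lean document; each statement's English description precedes it below -/
import Mathlib

section
/- (Régin's characterization) The alldifferent constraint on variables x_1,...,x_n with domains D_1,...,D_n is hyperarc consistent — i.e., every value v ∈ D_i extends to an injective assignment f with f i = v and f j ∈ D_j for all j — if and only if every edge (i, v) with v ∈ D_i of the value graph belongs to some matching of the value graph that covers all variables. -/
/-- Régin's characterization: an alldifferent constraint is hyperarc consistent
iff every edge `(i, v)` with `v ∈ D i` of its value graph belongs to some
matching covering all the variables. -/
theorem regin_hyperarc_iff_matchings {α : Type*} (n : ℕ) (D : Fin n → Finset α) :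
    (∀ i : Fin n, ∀ v ∈ D i, ∃ f : Fin n → α,
        Function.Injective f ∧ f i = v ∧ ∀ j, f j ∈ D j) ↔
      (∀ i : Fin n, ∀ v ∈ D i, ∃ M : Finset (Fin n × α),
        (∀ e ∈ M, e.2 ∈ D e.1) ∧
        (∀ e ∈ M, ∀ e' ∈ M, e ≠ e' → e.1 ≠ e'.1 ∧ e.2 ≠ e'.2) ∧
        (∀ j : Fin n, ∃ w, (j, w) ∈ M) ∧
        (i, v) ∈ M) := by
  constructor
  · intro h i v hv
    obtain ⟨f, hinj, hfi, hdom⟩ := h i v hv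
    classical
    refine ⟨Finset.univ.image (fun j => (j, f j)), ?_, ?_, ?_, ?_⟩
    · intro e he
      simp only [Finset.mem_image, Finset.mem_univ, true_and] at he
      obtain ⟨j, rfl⟩ := he
      exact hdom j
    · intro e he e' he' hne
      simp only [Finset.mem_image, Finset.mem_univ, true_and] at he he'
      obtain ⟨j, rfl⟩ := he
      obtain ⟨j', rfl⟩ := he'
      have hjj : j ≠ j' := by rintro rfl; exact hne rfl
      exact ⟨hjj, fun hf => hjj (hinj hf)⟩
    · intro j
      exact ⟨f j, by simp⟩
    · have : (i, v) = (i, f i) := by rw [hfi]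
      rw [this]; simp
  · intro h i v hv
    obtain ⟨M, hdom, hmatch, hcov, hiv⟩ := h i v hv
    classical
    choose g hg using hcov
    have key : ∀ j w, (j, w) ∈ M → g j = w := by
      intro j w hw
      by_contra hne
      have := hmatch (j, g j) (hg j) (j, w) hw (by simp [hne])
      exact this.1 rfl
    refine ⟨g, ?_, key i v hiv, fun j => hdom _ (hg j)⟩
    intro a b hab
    by_contra hne
    have := hmatch (a, g a) (hg a) (b, g b) (hg b) (by simp [hne])
    exact this.2 hab
end

section
/- (Puget's bounds-consistency condition, soundness direction) Suppose the alldifferent constraint on integer-interval domains has the property: for every interval I of integers, the number of variables whose domain is contained in I is at most |I|. Then an injective assignment f with f i ∈ [min D_i, max D_i] exists. -/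
/-- Hall condition for intervals from Puget's condition. -/
lemma puget_hall (n : ℕ) (D : Fin n → Finset ℤ)
    (hne : ∀ i, (D i).Nonempty)
    (hK : ∀ a b : ℤ, a ≤ b →
      ((Finset.univ.filter (fun i : Fin n => ∀ x ∈ D i, a ≤ x ∧ x ≤ b)).card : ℤ)
        ≤ b - a + 1)
    (S : Finset (Fin n)) :
    S.card ≤ (S.biUnion (fun i => Finset.Icc ((D i).min' (hne i)) ((D i).max' (hne i)))).card := by
  set t : Fin n → Finset ℤ := fun i => Finset.Icc ((D i).min' (hne i)) ((D i).max' (hne i)) with ht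
  induction S using Finset.strongInduction with
  | _ S ih =>
  rcases S.eq_empty_or_nonempty with rfl | hS
  · simp
  set U := S.biUnion t with hU
  -- a = minimum of the lower endpoints
  have himg : (S.image (fun i => (D i).min' (hne i))).Nonempty := hS.image _
  set a := (S.image (fun i => (D i).min' (hne i))).min' himg with ha
  obtain ⟨i0, hi0S, hi0⟩ := Finset.mem_image.mp (Finset.min'_mem _ himg)
  rw [← ha] at hi0
  have hmin_le : ∀ i ∈ S, a ≤ (D i).min' (hne i) := fun i hi =>
    Finset.min'_le _ _ (Finset.mem_image_of_mem _ hi)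
  have hti : ∀ i ∈ S, t i ⊆ U := fun i hi => Finset.subset_biUnion_of_mem t hi
  have hminmax : ∀ i, (D i).min' (hne i) ≤ (D i).max' (hne i) :=
    fun i => Finset.min'_le _ _ (Finset.max'_mem _ (hne i))
  have haU : a ∈ U := by
    apply hti i0 hi0S
    rw [ht]
    simp only [Finset.mem_Icc]
    exact ⟨hi0.le, hi0 ▸ hminmax i0⟩
  -- B = reachable right ends
  set B := U.filter (fun x => Finset.Icc a x ⊆ U) with hB
  have hBne : B.Nonempty := ⟨a, by
    simp only [hB, Finset.mem_filter]
    refine ⟨haU, ?_⟩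
    intro x hx
    simp only [Finset.mem_Icc] at hx
    have : x = a := le_antisymm hx.2 hx.1
    simpa [this] using haU⟩
  set b := B.max' hBne with hb
  have hab : a ≤ b := Finset.le_max' _ _ (by
    simp only [hB, Finset.mem_filter]
    refine ⟨haU, ?_⟩
    intro x hx
    simp only [Finset.mem_Icc] at hx
    have : x = a := le_antisymm hx.2 hx.1
    simpa [this] using haU)
  have hIccU : Finset.Icc a b ⊆ U := by
    have := Finset.max'_mem B hBne
    simp only [hB, Finset.mem_filter] at this
    exact this.2
  have hb1 : b + 1 ∉ U := by
    intro hcon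
    have hmem : b + 1 ∈ B := by
      simp only [hB, Finset.mem_filter]
      refine ⟨hcon, ?_⟩
      intro x hx
      simp only [Finset.mem_Icc] at hx
      rcases lt_or_eq_of_le hx.2 with h | h
      · exact hIccU (Finset.mem_Icc.mpr ⟨hx.1, by omega⟩)
      · simpa [h] using hcon
    have := Finset.le_max' B _ hmem
    omega
  set T := S.filter (fun i => (D i).max' (hne i) ≤ b) with hT
  have hi0T : i0 ∈ T := by
    have hmx : (D i0).max' (hne i0) ∈ B := by
      simp only [hB, Finset.mem_filter]
      constructor
      · exact hti i0 hi0S (by rw [ht]; simp only [Finset.mem_Icc]; exact ⟨hminmax i0, le_refl _⟩)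
      · intro x hx
        apply hti i0 hi0S
        rw [ht]
        simp only [Finset.mem_Icc] at hx ⊢
        exact ⟨hi0 ▸ hx.1, hx.2⟩
    simp only [hT, Finset.mem_filter]
    exact ⟨hi0S, Finset.le_max' _ _ hmx⟩
  -- card T ≤ card (Icc a b)
  have hTcard : T.card ≤ (Finset.Icc a b).card := by
    have hsub : T ⊆ Finset.univ.filter (fun i : Fin n => ∀ x ∈ D i, a ≤ x ∧ x ≤ b) := by
      intro i hi
      simp only [hT, Finset.mem_filter] at hi
      simp only [Finset.mem_filter, Finset.mem_univ, true_and]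
      intro x hx
      exact ⟨le_trans (hmin_le i hi.1) (Finset.min'_le _ _ hx),
        le_trans (Finset.le_max' _ _ hx) hi.2⟩
    have h1 := hK a b hab
    have h2 : (T.card : ℤ) ≤ b - a + 1 :=
      le_trans (by exact_mod_cast Finset.card_le_card hsub) h1
    have h3 : ((Finset.Icc a b).card : ℤ) = b - a + 1 := by
      rw [Int.card_Icc]; omega
    exact_mod_cast h2.trans_eq h3.symm
  -- S \ T
  set S' := S \ T with hS'
  have hS'sub : S' ⊂ S := Finset.sdiff_ssubset (Finset.filter_subset _ _) ⟨i0, hi0T⟩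
  have hS'card := ih S' hS'sub
  have hS'U : S'.biUnion t ⊆ U \ Finset.Icc a b := by
    intro x hx
    simp only [Finset.mem_biUnion] at hx
    obtain ⟨i, hiS', hxi⟩ := hx
    have hiS : i ∈ S := (Finset.mem_sdiff.mp hiS').1
    have hnT : ¬ (D i).max' (hne i) ≤ b := by
      have := (Finset.mem_sdiff.mp hiS').2
      simp only [hT, Finset.mem_filter] at this
      tauto
    have hmin2 : b + 2 ≤ (D i).min' (hne i) := by
      by_contra hcon
      apply hb1
      apply hti i hiS
      rw [ht]
      simp only [Finset.mem_Icc]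
      omega
    rw [ht] at hxi
    simp only [Finset.mem_Icc] at hxi
    rw [Finset.mem_sdiff]
    refine ⟨hti i hiS (by rw [ht]; simpa using hxi), ?_⟩
    simp only [Finset.mem_Icc]
    omega
  have hsplit : T.card + S'.card = S.card := by
    have h1 : T ⊆ S := Finset.filter_subset _ _
    have h2 : S'.card = S.card - T.card := by rw [hS']; exact Finset.card_sdiff_of_subset h1
    have h3 : T.card ≤ S.card := Finset.card_le_card h1
    omega
  calc S.card = T.card + S'.card := hsplit.symm
    _ ≤ (Finset.Icc a b).card + (U \ Finset.Icc a b).card :=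
        add_le_add hTcard (hS'card.trans (Finset.card_le_card hS'U))
    _ = U.card := by
        rw [add_comm]
        exact Finset.card_sdiff_add_card_eq_card hIccU

/-- Puget's bounds-consistency condition (soundness): if for every integer
interval `[a, b]` the number of variables whose domain lies inside `[a, b]`
is at most `b - a + 1`, then there is an injective assignment with each
`f i` in the range `[min (D i), max (D i)]`. -/
theorem puget_bounds_consistency (n : ℕ) (D : Fin n → Finset ℤ)
    (hne : ∀ i, (D i).Nonempty)
    (hK : ∀ a b : ℤ, a ≤ b →
      ((Finset.univ.filter (fun i : Fin n => ∀ x ∈ D i, a ≤ x ∧ x ≤ b)).card : ℤ)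
        ≤ b - a + 1) :
    ∃ f : Fin n → ℤ, Function.Injective f ∧
      ∀ i, (D i).min' (hne i) ≤ f i ∧ f i ≤ (D i).max' (hne i) := by
  obtain ⟨f, hinj, hf⟩ := (Finset.all_card_le_biUnion_card_iff_exists_injective
    (fun i : Fin n => Finset.Icc ((D i).min' (hne i)) ((D i).max' (hne i)))).mp
    (puget_hall n D hne hK)
  exact ⟨f, hinj, fun i => Finset.mem_Icc.mp (hf i)⟩
end

section
/- For any scalar z and n ≥ 1, the permanent of z·I_n + J equals n! · ∑_{r=0}^{n} z^r / r!; equivalently, per(z·I_n + J) = ∑_{r=0}^{n} (n!/r!) · z^r. -/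
/-!
Expand `∏ i, (z [σ i = i] + 1)` as a sum over the subsets `t` of the fixed points of `σ` and
exchange the sums: a subset `t` of size `r` is fixed pointwise by `(n - r)!` permutations, and
there are `n.choose r` such subsets, so `z ^ r` gets the coefficient
`n.choose r * (n - r)! = n! / r!`.
-/

def permanent {n : ℕ} {R : Type*} [CommRing R] (A : Matrix (Fin n) (Fin n) R) : R :=
  ∑ σ : Equiv.Perm (Fin n), ∏ i, A i (σ i)

open Finset
open scoped Nat

theorem Nat.choose_mul_factorial_sub {n r : ℕ} (hr : r ≤ n) :
    n.choose r * (n - r)! = n ! / r ! := by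
  rw [eq_comm, Nat.div_eq_iff_eq_mul_left r.factorial_pos (factorial_dvd_factorial hr),
    ← choose_mul_factorial_mul_factorial hr, mul_right_comm]

section

variable {ι : Type*} [Fintype ι] [DecidableEq ι] {R : Type*} [CommSemiring R]

namespace Equiv.Perm

theorem card_fixing_pointwise (s : Finset ι) :
    #{σ : Perm ι | ∀ i ∈ s, σ i = i} = (Fintype.card ι - #s)! := by
  rw [← Fintype.card_subtype, ← Fintype.card_coe s, ← Fintype.card_subtype_compl,
    ← Fintype.card_perm]
  refine Fintype.card_congr ((Equiv.subtypeEquivRight fun σ => ?_).trans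
    (Perm.subtypeEquivSubtypePerm fun i => i ∉ s).symm)
  simp only [not_not]

theorem sum_prod_ite_fixed (s : Finset ι) (z : R) :
    ∑ σ : Perm ι, ∏ i ∈ s, (if σ i = i then z else 0) = (Fintype.card ι - #s)! * z ^ #s := by
  have h (σ : Perm ι) :
      ∏ i ∈ s, (if σ i = i then z else 0) = if ∀ i ∈ s, σ i = i then z ^ #s else 0 := by
    simp only [prod_ite_zero, prod_const]
  simp_rw [h, ← sum_filter, sum_const, card_fixing_pointwise, nsmul_eq_mul]

end Equiv.Perm

theorem Matrix.permanent_smul_one_add_allOnes (z : R) :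
    (z • (1 : Matrix ι ι R) + of fun _ _ => 1).permanent =
      ∑ r ∈ range (Fintype.card ι + 1), (((Fintype.card ι)! / r ! : ℕ) : R) * z ^ r := by
  simp only [permanent, add_apply, smul_apply, one_apply, of_apply, smul_eq_mul, mul_ite,
    mul_one, mul_zero, prod_add_one]
  rw [sum_comm]
  simp_rw [Equiv.Perm.sum_prod_ite_fixed]
  rw [sum_powerset_apply_card (fun r => ((Fintype.card ι - r)! : R) * z ^ r), card_univ]
  refine sum_congr rfl fun r hr => ?_
  rw [nsmul_eq_mul, ← mul_assoc, ← Nat.cast_mul,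
    Nat.choose_mul_factorial_sub (Nat.lt_succ_iff.mp (mem_range.mp hr))]

end

theorem permanent_eq_matrix_permanent {n : ℕ} {R : Type*} [CommRing R]
    (A : Matrix (Fin n) (Fin n) R) : permanent A = A.permanent :=
  A.permanent_transpose

/-- For any scalar `z` and `n ≥ 1`,
`per (z • I + J) = ∑_{r=0}^{n} (n!/r!) · z^r`. -/
theorem permanent_smul_one_add_allOnes {R : Type*} [CommRing R] (n : ℕ)
    (z : R) :
    permanent (z • (1 : Matrix (Fin n) (Fin n) R) + Matrix.of fun _ _ => (1 : R)) =
      ∑ r ∈ Finset.range (n + 1), ((n.factorial / r.factorial : ℕ) : R) * z ^ r := by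
  rw [permanent_eq_matrix_permanent, Matrix.permanent_smul_one_add_allOnes, Fintype.card_fin]
end

section
/- (Bregman–Minc inequality) If A is an n×n matrix with entries in {0,1} and row sums r_1,...,r_n all nonzero, then per(A) ≤ ∏_{i=1}^n (r_i!)^{1/r_i}. -/
open Finset Equiv Real

variable {n : ℕ}

section CommRing

variable {R : Type*} [CommRing R]

theorem sum_prod_perm_of_apply_zero_eq_zero (A : Matrix (Fin (n + 1)) (Fin (n + 1)) R) :
    ∑ σ : Perm (Fin (n + 1)) with σ 0 = 0, ∏ j, A j (σ j) =
      A 0 0 * permanent (A.submatrix Fin.succ Fin.succ) := by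
  rw [sum_filter, ← Perm.decomposeFin.symm.sum_comp, Fintype.sum_prod_type,
    Fintype.sum_eq_single 0 fun p hp => by simp [hp]]
  simp [permanent, Fin.prod_univ_succ, mul_sum]

theorem sum_prod_perm_of_apply_eq (A : Matrix (Fin (n + 1)) (Fin (n + 1)) R)
    (i k : Fin (n + 1)) :
    ∑ σ : Perm (Fin (n + 1)) with σ i = k, ∏ j, A j (σ j) =
      A i k * permanent (A.submatrix i.succAbove k.succAbove) := by
  -- the cycles `i.cycleRange`, `k.cycleRange` move the entry `(i, k)` to `(0, 0)`
  have h :=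
    sum_prod_perm_of_apply_zero_eq_zero (A.submatrix i.cycleRange.symm k.cycleRange.symm)
  simp only [Matrix.submatrix_submatrix, Function.comp_def, Fin.cycleRange_symm_succ,
    Matrix.submatrix_apply, Fin.cycleRange_symm_zero] at h
  rw [← h, sum_filter, sum_filter]
  refine Fintype.sum_equiv ((Equiv.mulRight (i.cycleRange⁻¹ : Perm (Fin (n + 1)))).trans
    (Equiv.mulLeft k.cycleRange)) _ _ fun σ => ?_
  have hk : k.cycleRange (σ i) = 0 ↔ σ i = k := by
    rw [← Fin.cycleRange_self k, k.cycleRange.injective.eq_iff]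
  simp only [Equiv.trans_apply, Equiv.coe_mulRight, Equiv.coe_mulLeft, Perm.mul_apply,
    Perm.inv_def, Fin.cycleRange_symm_zero, hk, Equiv.symm_apply_apply,
    (i.cycleRange.symm).prod_comp fun j => A j (σ j)]

theorem sum_prod_perm_mul_apply (A : Matrix (Fin (n + 1)) (Fin (n + 1)) R) (i : Fin (n + 1))
    (f : Fin (n + 1) → R) :
    ∑ σ : Perm (Fin (n + 1)), (∏ j, A j (σ j)) * f (σ i) =
      ∑ k, A i k * permanent (A.submatrix i.succAbove k.succAbove) * f k := by
  rw [← sum_fiberwise univ fun σ : Perm (Fin (n + 1)) => σ i]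
  refine sum_congr rfl fun k _ => ?_
  rw [← sum_prod_perm_of_apply_eq, sum_mul]
  exact sum_congr rfl fun σ hσ => by rw [(mem_filter.1 hσ).2]

theorem permanent_succ_row (A : Matrix (Fin (n + 1)) (Fin (n + 1)) R) (i : Fin (n + 1)) :
    permanent A = ∑ k, A i k * permanent (A.submatrix i.succAbove k.succAbove) := by
  rw [permanent]
  simpa using sum_prod_perm_mul_apply A i 1

end CommRing

theorem mul_log_sum_mul_le {ι : Type*} (s : Finset ι) {w t : ι → ℝ} (hw : ∀ i ∈ s, 0 ≤ w i)
    (ht : ∀ i ∈ s, 0 ≤ t i) :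
    (∑ i ∈ s, w i * t i) * log (∑ i ∈ s, w i * t i) ≤
      (∑ i ∈ s, w i * t i) * log (∑ i ∈ s, w i) + ∑ i ∈ s, w i * (t i * log (t i)) := by
  rcases (sum_nonneg hw).eq_or_lt with hW | hW
  · have hw0 : ∀ i ∈ s, w i = 0 := (sum_eq_zero_iff_of_nonneg hw).1 hW.symm
    rw [sum_eq_zero fun i hi => by rw [hw0 i hi, zero_mul],
      sum_eq_zero fun i hi => show w i * (t i * log (t i)) = 0 by rw [hw0 i hi, zero_mul]]
    simp
  · have jensen := convexOn_mul_log.map_centerMass_le hw hW ht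
    simp only [centerMass, smul_eq_mul, Function.comp_def] at jensen
    set W := ∑ i ∈ s, w i
    set T := ∑ i ∈ s, w i * t i
    have hT : T * log T - T * log W = T * log (T / W) := by
      rcases eq_or_ne T 0 with h | h
      · simp [h]
      · rw [log_div h hW.ne', mul_sub]
    rw [mul_assoc, mul_le_mul_iff_of_pos_left (inv_pos.2 hW), inv_mul_eq_div] at jensen
    linarith

theorem permanent_nonneg {A : Matrix (Fin n) (Fin n) ℝ} (hA : ∀ i j, 0 ≤ A i j) :
    0 ≤ permanent A :=
  sum_nonneg fun _ _ => prod_nonneg fun _ _ => hA _ _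

theorem permanent_mul_log_le {A : Matrix (Fin (n + 1)) (Fin (n + 1)) ℝ} (hA : ∀ i j, 0 ≤ A i j)
    (i : Fin (n + 1)) :
    permanent A * log (permanent A) ≤ permanent A * log (∑ k, A i k) +
      ∑ σ : Perm (Fin (n + 1)), (∏ j, A j (σ j)) *
        log (permanent (A.submatrix i.succAbove (σ i).succAbove)) := by
  have h := mul_log_sum_mul_le univ (fun k _ => hA i k)
    (t := fun k => permanent (A.submatrix i.succAbove k.succAbove))
    (fun k _ => permanent_nonneg fun _ _ => hA _ _)
  rw [← permanent_succ_row] at h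
  rw [sum_prod_perm_mul_apply A i fun k => log (permanent (A.submatrix i.succAbove k.succAbove))]
  simpa only [mul_assoc] using h

-- `logFactorialDiv 0 = 0` by the convention `x / 0 = 0`, matching `(0 ! : ℝ) ^ (1 / 0) = 1`.
noncomputable def logFactorialDiv (m : ℕ) : ℝ := log m.factorial / m

theorem logFactorialDiv_nonneg (m : ℕ) : 0 ≤ logFactorialDiv m :=
  div_nonneg (log_nonneg (Nat.one_le_cast.2 m.factorial_pos)) m.cast_nonneg

theorem natCast_mul_logFactorialDiv (m : ℕ) : m * logFactorialDiv m = log m.factorial := by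
  rcases eq_or_ne m 0 with rfl | hm
  · simp
  · exact mul_div_cancel₀ _ (Nat.cast_ne_zero.2 hm)

theorem natCast_succ_mul_logFactorialDiv_succ (m : ℕ) :
    (m + 1 : ℕ) * logFactorialDiv (m + 1) = log (m + 1) + m * logFactorialDiv m := by
  rw [natCast_mul_logFactorialDiv, natCast_mul_logFactorialDiv, Nat.factorial_succ,
    Nat.cast_mul, log_mul (by positivity) (by positivity), Nat.cast_succ]

theorem exp_logFactorialDiv (m : ℕ) :
    exp (logFactorialDiv m) = (m.factorial : ℝ) ^ ((1 : ℝ) / m) := by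
  rw [rpow_def_of_pos (by positivity), mul_one_div, logFactorialDiv]

theorem sum_sum_succAbove_perm {M : Type*} [AddCommGroup M] (σ : Perm (Fin (n + 1)))
    (h : Fin (n + 1) → Fin (n + 1) → M) :
    ∑ i, ∑ a, h (i.succAbove a) (σ i) = ∑ j, ∑ k, h j k - ∑ j, h j (σ j) := by
  have hrow : ∀ i, ∑ a, h (i.succAbove a) (σ i) = ∑ j, h j (σ i) - h i (σ i) := fun i => by
    rw [Fin.sum_univ_succAbove (fun j => h j (σ i)) i, add_sub_cancel_left]
  rw [sum_congr rfl fun i _ => hrow i, sum_sub_distrib, sum_comm]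
  simp only [Equiv.sum_comp σ]

theorem sum_apply_sum_sub_of_le_one {ι : Type*} [Fintype ι] {b : ι → ℕ} (hb : ∀ k, b k ≤ 1)
    (g : ℕ → ℝ) :
    ∑ k, g (∑ j, b j - b k) =
      Fintype.card ι * g (∑ j, b j) + (∑ j, b j : ℕ) * (g (∑ j, b j - 1) - g (∑ j, b j)) := by
  have hterm : ∀ k,
      g (∑ j, b j - b k) = g (∑ j, b j) + b k * (g (∑ j, b j - 1) - g (∑ j, b j)) := fun k => by
    rcases Nat.le_one_iff_eq_zero_or_eq_one.1 (hb k) with h | h <;> simp [h]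
  rw [sum_congr rfl fun k _ => hterm k, sum_add_distrib, sum_const, ← sum_mul, card_univ,
    nsmul_eq_mul, Nat.cast_sum]

theorem sum_log_permanent_minor_le (B : Matrix (Fin (n + 1)) (Fin (n + 1)) ℕ)
    (hB : ∀ i j, B i j ≤ 1)
    (ih : ∀ B' : Matrix (Fin n) (Fin n) ℕ, (∀ i j, B' i j ≤ 1) →
      log (permanent (B'.map ((↑) : ℕ → ℝ))) ≤ ∑ i, logFactorialDiv (∑ j, B' i j))
    {σ : Perm (Fin (n + 1))} (hσ : ∀ j, B j (σ j) = 1) :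
    ∑ i, log (permanent ((B.map ((↑) : ℕ → ℝ)).submatrix i.succAbove (σ i).succAbove)) ≤
      ∑ j, ((n + 1) * logFactorialDiv (∑ k, B j k) - log (∑ k, B j k : ℕ)) := by
  have hminor : ∀ j k, ∑ b, B j (k.succAbove b) = ∑ c, B j c - B j k := fun j k => by
    rw [Fin.sum_univ_succAbove (B j) k, Nat.add_sub_cancel_left]
  calc ∑ i, log (permanent ((B.map ((↑) : ℕ → ℝ)).submatrix i.succAbove (σ i).succAbove))
      ≤ ∑ i, ∑ a, logFactorialDiv (∑ c, B (i.succAbove a) c - B (i.succAbove a) (σ i)) :=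
        sum_le_sum fun i _ => by
          simpa only [Matrix.submatrix_map, Matrix.submatrix_apply, hminor] using
            ih (B.submatrix i.succAbove (σ i).succAbove) fun a b => hB _ _
    _ = ∑ j, (∑ k, logFactorialDiv (∑ c, B j c - B j k) -
          logFactorialDiv (∑ c, B j c - 1)) := by
        rw [sum_sum_succAbove_perm σ fun j k => logFactorialDiv (∑ c, B j c - B j k),
          sum_sub_distrib]
        simp only [hσ]
    _ = ∑ j, ((n + 1) * logFactorialDiv (∑ k, B j k) - log (∑ k, B j k : ℕ)) := by
        refine sum_congr rfl fun j _ => ?_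
        obtain ⟨m, hm⟩ : ∃ m, ∑ c, B j c = m + 1 := Nat.exists_eq_add_one.2 <| by
          have := single_le_sum (fun c _ => Nat.zero_le (B j c)) (mem_univ (σ j))
          have := hσ j
          omega
        rw [sum_apply_sum_sub_of_le_one (hB j), hm, Nat.add_sub_cancel, Fintype.card_fin]
        have := natCast_succ_mul_logFactorialDiv_succ m
        push_cast at this ⊢
        linarith

theorem log_permanent_le_sum_logFactorialDiv (B : Matrix (Fin n) (Fin n) ℕ)
    (hB : ∀ i j, B i j ≤ 1) :
    log (permanent (B.map ((↑) : ℕ → ℝ))) ≤ ∑ i, logFactorialDiv (∑ j, B i j) := by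
  induction n with
  | zero => simp [permanent]
  | succ n ih =>
    set A := B.map ((↑) : ℕ → ℝ)
    set P := permanent A
    have hA : ∀ i j, 0 ≤ A i j := fun i j => Nat.cast_nonneg _
    rcases (permanent_nonneg hA : 0 ≤ P).eq_or_lt with hP | hP
    · rw [show P = 0 from hP.symm, log_zero]
      exact sum_nonneg fun i _ => logFactorialDiv_nonneg _
    have hweight : ∑ σ : Perm (Fin (n + 1)), ∏ j, A j (σ j) = P := rfl
    have hrow : ∀ i, ∑ k, A i k = (∑ k, B i k : ℕ) := fun i => by simp [A]
    have hsupp : ∀ σ : Perm (Fin (n + 1)), ∏ j, A j (σ j) ≠ 0 → ∀ j, B j (σ j) = 1 :=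
      fun σ h j => by
        have := prod_ne_zero_iff.1 h j (mem_univ j)
        have := hB j (σ j)
        simp only [A, Matrix.map_apply, Nat.cast_ne_zero] at *
        omega
    refine le_of_mul_le_mul_left (le_of_mul_le_mul_left ?_ (Nat.cast_add_one_pos n)) hP
    calc (n + 1 : ℝ) * (P * log P) = ∑ i : Fin (n + 1), P * log P := by simp
      _ ≤ ∑ i, (P * log (∑ k, B i k : ℕ) + ∑ σ : Perm (Fin (n + 1)), (∏ j, A j (σ j)) *
            log (permanent (A.submatrix i.succAbove (σ i).succAbove))) :=
          sum_le_sum fun i _ => hrow i ▸ permanent_mul_log_le hA i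
      _ = ∑ i, P * log (∑ k, B i k : ℕ) + ∑ σ : Perm (Fin (n + 1)), (∏ j, A j (σ j)) *
            ∑ i, log (permanent (A.submatrix i.succAbove (σ i).succAbove)) := by
          rw [sum_add_distrib, sum_comm]
          simp only [mul_sum]
      _ ≤ ∑ i, P * log (∑ k, B i k : ℕ) + ∑ σ : Perm (Fin (n + 1)), (∏ j, A j (σ j)) *
            ∑ j, ((n + 1) * logFactorialDiv (∑ k, B j k) - log (∑ k, B j k : ℕ)) := by
          refine add_le_add le_rfl (sum_le_sum fun σ _ => ?_)
          rcases eq_or_ne (∏ j, A j (σ j)) 0 with h | h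
          · simp [h]
          · exact mul_le_mul_of_nonneg_left (sum_log_permanent_minor_le B hB ih (hsupp σ h))
              (prod_nonneg fun j _ => hA _ _)
      _ = (n + 1) * (P * ∑ i, logFactorialDiv (∑ j, B i j)) := by
          rw [← sum_mul, hweight, sum_sub_distrib, ← mul_sum, ← mul_sum]
          ring

theorem bregman_minc_general (n : ℕ) (A : Matrix (Fin n) (Fin n) ℝ)
    (hA : ∀ i j, A i j = 0 ∨ A i j = 1)
    (r : Fin n → ℕ) (hr : ∀ i, ∑ j, A i j = (r i : ℝ)) :
    permanent A ≤ ∏ i, ((r i).factorial : ℝ) ^ ((1 : ℝ) / (r i : ℝ)) := by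
  set B : Matrix (Fin n) (Fin n) ℕ := Matrix.of fun i j => if A i j = 1 then 1 else 0
  have hAB : B.map (↑) = A := by
    ext i j
    rcases hA i j with h | h <;> simp [B, h]
  have hBr : ∀ i, ∑ j, B i j = r i := fun i => by
    exact_mod_cast (show ((∑ j, B i j : ℕ) : ℝ) = r i by rw [← hr i, ← hAB]; simp)
  have hlog := log_permanent_le_sum_logFactorialDiv B fun i j => by
    simp only [B, Matrix.of_apply]
    split_ifs <;> omega
  rw [hAB] at hlog
  simp only [hBr] at hlog
  calc permanent A ≤ exp (log (permanent A)) := le_exp_log _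
    _ ≤ exp (∑ i, logFactorialDiv (r i)) := exp_le_exp.2 hlog
    _ = _ := by simp only [exp_sum, exp_logFactorialDiv]

/-- Bregman–Minc inequality: for a 0-1 matrix with nonzero row sums `r i`,
`per A ≤ ∏ i (r i !)^(1 / r i)`. -/
theorem bregman_minc (n : ℕ) (A : Matrix (Fin n) (Fin n) ℝ)
    (hA : ∀ i j, A i j = 0 ∨ A i j = 1)
    (r : Fin n → ℕ) (hr : ∀ i, ∑ j, A i j = (r i : ℝ)) (hpos : ∀ i, 0 < r i) :
    permanent A ≤ ∏ i, ((r i).factorial : ℝ) ^ ((1 : ℝ) / (r i : ℝ)) :=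
  bregman_minc_general n A hA r hr
end
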